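/- arXiv:1511.00282 — 2 statements merged into one kernel-verified Lean document; each statement's English description precedes it below -/
import Mathlib

section
/- Under the spiked condition on Σ_w and with p > s + K − 1, if U_O is an orthogonal matrix diagonalizing Σ_γ = Σ_w + γ Σ_b (γ > 0) with eigenvalues in descending order, partitioned as U_O = (U_{O1}, U_{O2}) with U_{O1} of size p×(s+K−1), then U_{O2}ᵀ Σ_w⁻¹ (μ_k − μ_ℓ) = 0 for all 1 ≤ k < ℓ ≤ K, i.e., all Bayes discriminant directions Σ_w⁻¹(μ_k − μ_ℓ) lie in the column span of U_{O1}. -/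
open Matrix Finset
open scoped ComplexOrder
open Module (finrank)
open Submodule (span)

/-!
Write `Σ_w = λ I + B` with `B = ∑ᵢ (λᵢ - λ) ξᵢ ξᵢᵀ`, where `λ` is the common tail eigenvalue.
Then `Σ_γ - λ I = B + γ Σ_b` is a sum of two positive semidefinite matrices of ranks at most `s`
and `K - 1`; the second bound holds because `∑ₖ πₖ μₖ = 0` makes the means linearly dependent.
Since the eigenvalues `d` are sorted, at most `s + K - 1` of the `dₜ - λ` can be positive, so
`d_j ≤ λ` for `j ≥ s + K - 1`. The quadratic form of `B + γ Σ_b` at `u_j` is then `≤ 0`, which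
forces `B u_j = 0` and `Σ_b u_j = 0`. The first gives `Σ_w u_j = λ u_j`, hence
`u_jᵀ Σ_w⁻¹ x = λ⁻¹ u_jᵀ x`; the second gives `u_j ⊥ μₖ` for every `k`.
-/

theorem finrank_span_image_finset_le_card {ι K M : Type*} [DivisionRing K] [AddCommGroup M]
    [Module K M] (f : ι → M) (T : Finset ι) : finrank K (span K (f '' T)) ≤ #T := by
  classical
  rw [← coe_image]
  exact (finrank_span_finset_le_card _).trans card_image_le

theorem finrank_span_range_lt_card {ι K M : Type*} [Fintype ι] [Field K] [AddCommGroup M]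
    [Module K M] {v : ι → M} {w : ι → K} (hw : ∑ i, w i • v i = 0) {i₀ : ι}
    (hi₀ : w i₀ ≠ 0) : finrank K (span K (Set.range v)) < Fintype.card ι := by
  have hdep : ¬LinearIndependent K v :=
    Fintype.not_linearIndependent_iff.mpr ⟨w, hw, i₀, hi₀⟩
  exact (finrank_range_le_card v).lt_of_ne fun h =>
    hdep (linearIndependent_iff_card_eq_finrank_span.mpr h.symm)

namespace Matrix

section Rank

variable {m n : Type*} [Fintype m] [Fintype n] {𝕜 : Type*} [Field 𝕜]

theorem rank_le_finrank_of_mulVec_mem {A : Matrix m n 𝕜} {W : Submodule 𝕜 (m → 𝕜)}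
    (hA : ∀ v, A *ᵥ v ∈ W) : A.rank ≤ finrank 𝕜 W :=
  Submodule.finrank_mono (LinearMap.range_le_iff_comap.mpr (Submodule.eq_top_iff'.mpr hA))

theorem rank_add_le (A B : Matrix m n 𝕜) : (A + B).rank ≤ A.rank + B.rank := by
  refine (rank_le_finrank_of_mulVec_mem fun v => ?_).trans
    (Submodule.finrank_add_le_finrank_add_finrank _ _)
  rw [add_mulVec]
  exact add_mem (Submodule.mem_sup_left ⟨v, rfl⟩) (Submodule.mem_sup_right ⟨v, rfl⟩)

end Rank

section OuterProducts

variable {n ι R : Type*} [Fintype n] [Fintype ι]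

theorem sum_smul_vecMulVec_mulVec [CommSemiring R] (c : ι → R) (x y : ι → n → R) (v : n → R) :
    (∑ i, c i • vecMulVec (x i) (y i)) *ᵥ v = ∑ i, (c i * (y i ⬝ᵥ v)) • x i := by
  simp only [sum_mulVec, smul_mulVec, vecMulVec_mulVec, op_smul_eq_smul, smul_smul]

theorem sum_smul_vecMulVec_mulVec_mem_span [CommRing R] (c : ι → R) (x y : ι → n → R)
    {S : Set ι} (hS : ∀ i, c i ≠ 0 → i ∈ S) (v : n → R) :
    (∑ i, c i • vecMulVec (x i) (y i)) *ᵥ v ∈ span R (x '' S) := by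
  rw [sum_smul_vecMulVec_mulVec]
  refine Submodule.sum_mem _ fun i _ => ?_
  by_cases hi : c i = 0
  · simp [hi]
  · exact Submodule.smul_mem _ _ (Submodule.subset_span ⟨i, hS i hi, rfl⟩)

theorem rank_sum_smul_vecMulVec_le [Field R] (c : ι → R) (x y : ι → n → R) {T : Finset ι}
    (hT : ∀ i, c i ≠ 0 → i ∈ T) : (∑ i, c i • vecMulVec (x i) (y i)).rank ≤ #T :=
  (rank_le_finrank_of_mulVec_mem (sum_smul_vecMulVec_mulVec_mem_span c x y hT)).trans
    (finrank_span_image_finset_le_card x T)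

theorem rank_sum_smul_vecMulVec_le_card_sub_one [Field R] (c : ι → R) {x : ι → n → R}
    (y : ι → n → R) {w : ι → R} (hw : ∑ i, w i • x i = 0) {i₀ : ι} (hi₀ : w i₀ ≠ 0) :
    (∑ i, c i • vecMulVec (x i) (y i)).rank ≤ Fintype.card ι - 1 := by
  refine (rank_le_finrank_of_mulVec_mem (W := span R (Set.range x)) fun v => ?_).trans
    (Nat.le_sub_one_of_lt (finrank_span_range_lt_card hw hi₀))
  simpa using sum_smul_vecMulVec_mulVec_mem_span c x y (S := Set.univ) (fun _ _ => trivial) v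

theorem posSemidef_sum_smul_vecMulVec_self {c : ι → ℝ} (hc : ∀ i, 0 ≤ c i) (x : ι → n → ℝ) :
    (∑ i, c i • vecMulVec (x i) (x i)).PosSemidef :=
  posSemidef_sum _ fun i _ => by
    simpa using (posSemidef_vecMulVec_self_star (x i)).smul (hc i)

theorem dotProduct_eq_zero_of_sum_smul_vecMulVec_self_mulVec_eq_zero {c : ι → ℝ}
    (hc : ∀ i, 0 < c i) {x : ι → n → ℝ} {v : n → ℝ}
    (h : (∑ i, c i • vecMulVec (x i) (x i)) *ᵥ v = 0) (i : ι) : x i ⬝ᵥ v = 0 := by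
  have hquad : ∑ i, c i * (x i ⬝ᵥ v) ^ 2 = 0 := by
    have := congrArg (v ⬝ᵥ ·) h
    simp only [sum_smul_vecMulVec_mulVec, dotProduct_sum, dotProduct_smul, smul_eq_mul,
      dotProduct_zero] at this
    simpa [dotProduct_comm v, mul_assoc, sq] using this
  have := (sum_eq_zero_iff_of_nonneg fun i _ => mul_nonneg (hc i).le (sq_nonneg _)).mp hquad i
    (mem_univ i)
  simpa [(hc i).ne'] using this

variable [DecidableEq n] [CommRing R] {ξ : n → n → R}

theorem sum_vecMulVec_self_eq_one (hξ : ∀ i j, ξ i ⬝ᵥ ξ j = if i = j then 1 else 0) :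
    ∑ i, vecMulVec (ξ i) (ξ i) = 1 := by
  have hrows : of ξ * (of ξ)ᵀ = 1 := by
    ext i j
    simpa [mul_apply, one_apply, dotProduct] using hξ i j
  have hcols : (of ξ)ᵀ * of ξ = 1 := mul_eq_one_comm.mp hrows
  ext a b
  simpa [mul_apply, sum_apply, vecMulVec_apply] using congrFun₂ hcols a b

theorem sum_smul_vecMulVec_self_eq_smul_one_add
    (hξ : ∀ i j, ξ i ⬝ᵥ ξ j = if i = j then 1 else 0) (c : n → R) (a : R) :
    ∑ i, c i • vecMulVec (ξ i) (ξ i) = a • 1 + ∑ i, (c i - a) • vecMulVec (ξ i) (ξ i) := by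
  rw [← sum_vecMulVec_self_eq_one hξ, smul_sum, ← sum_add_distrib]
  exact sum_congr rfl fun i _ => by rw [← add_smul, add_sub_cancel]

end OuterProducts

section Eigenvectors

variable {n 𝕜 : Type*} [Fintype n] [DecidableEq n] [Field 𝕜]

theorem card_le_rank_of_mulVec_col_eq_smul {A U : Matrix n n 𝕜} {d : n → 𝕜} (hU : IsUnit U)
    (heig : ∀ t, A *ᵥ U.col t = d t • U.col t) {T : Finset n} (hT : ∀ t ∈ T, d t ≠ 0) :
    #T ≤ A.rank := by
  have hli : LinearIndependent 𝕜 fun t : T => U.col t :=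
    (linearIndependent_cols_of_isUnit hU).comp _ Subtype.val_injective
  have hspan : span 𝕜 (Set.range fun t : T => U.col t) ≤ LinearMap.range A.mulVecLin := by
    rw [Submodule.span_le]
    rintro _ ⟨t, rfl⟩
    refine ⟨(d t)⁻¹ • U.col t, ?_⟩
    rw [mulVecLin_apply, mulVec_smul, heig, smul_smul, inv_mul_cancel₀ (hT t t.2), one_smul]
  calc #T = Fintype.card T := (Fintype.card_coe T).symm
    _ = finrank 𝕜 (span 𝕜 (Set.range fun t : T => U.col t)) := (finrank_span_eq_card hli).symm
    _ ≤ A.rank := Submodule.finrank_mono hspan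

theorem eigenvalue_nonpos_of_rank_le [LinearOrder 𝕜] {p : ℕ} {A U : Matrix (Fin p) (Fin p) 𝕜}
    {d : Fin p → 𝕜} (hU : IsUnit U) (heig : ∀ t, A *ᵥ U.col t = d t • U.col t)
    (hd : Antitone d) {j : Fin p} (hj : A.rank ≤ j) : d j ≤ 0 := by
  by_contra! hpos
  have := card_le_rank_of_mulVec_col_eq_smul hU heig (T := Iic j) fun t ht =>
    (hpos.trans_le (hd (mem_Iic.mp ht))).ne'
  rw [Fin.card_Iic] at this
  omega

theorem mulVec_col_eq_smul_of_transpose_mul_mul_eq_diagonal {S U : Matrix n n 𝕜} {d : n → 𝕜}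
    (hU : U ∈ orthogonalGroup n 𝕜) (hdiag : Uᵀ * S * U = diagonal d) (t : n) :
    S *ᵥ U.col t = d t • U.col t := by
  have hSU : S * U = U * diagonal d := by
    rw [← hdiag, ← mul_assoc, ← mul_assoc, (mem_orthogonalGroup_iff n 𝕜).mp hU, one_mul]
  ext i
  have := congrFun₂ hSU i t
  rw [mul_diagonal] at this
  simpa [mulVec, dotProduct, mul_apply, mul_comm] using this

end Eigenvectors

theorem PosSemidef.mulVec_eq_zero_of_add_mulVec_eq_smul {n 𝕜 : Type*} [Fintype n] [RCLike 𝕜]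
    {A B : Matrix n n 𝕜} (hA : A.PosSemidef) (hB : B.PosSemidef) {x : n → 𝕜} {c : 𝕜}
    (hx : (A + B) *ᵥ x = c • x) (hc : c ≤ 0) : A *ᵥ x = 0 ∧ B *ᵥ x = 0 := by
  have hA₀ := hA.dotProduct_mulVec_nonneg x
  have hB₀ := hB.dotProduct_mulVec_nonneg x
  have hsum : star x ⬝ᵥ A *ᵥ x + star x ⬝ᵥ B *ᵥ x ≤ 0 := by
    rw [← dotProduct_add, ← add_mulVec, hx, dotProduct_smul, smul_eq_mul]
    exact mul_nonpos_of_nonpos_of_nonneg hc (dotProduct_star_self_nonneg x)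
  obtain ⟨hAx, hBx⟩ :=
    (add_eq_zero_iff_of_nonneg hA₀ hB₀).mp (hsum.antisymm (add_nonneg hA₀ hB₀))
  exact ⟨(hA.dotProduct_mulVec_zero_iff x).mp hAx, (hB.dotProduct_mulVec_zero_iff x).mp hBx⟩

theorem PosDef.dotProduct_inv_mulVec_of_mulVec_eq_smul {n : Type*} [Fintype n] [DecidableEq n]
    {S : Matrix n n ℝ} (hS : S.PosDef) {u : n → ℝ} {c : ℝ} (hu : S *ᵥ u = c • u)
    (x : n → ℝ) : u ⬝ᵥ S⁻¹ *ᵥ x = c⁻¹ * (u ⬝ᵥ x) := by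
  have hinv : S⁻¹ *ᵥ u = c⁻¹ • u := by
    have hu' : u = c • S⁻¹ *ᵥ u := by
      rw [← mulVec_smul, ← hu, mulVec_mulVec,
        nonsing_inv_mul _ ((isUnit_iff_isUnit_det S).mp hS.isUnit), one_mulVec]
    by_cases hc : c = 0
    · rw [hc, zero_smul] at hu'
      simp [hc, hu']
    · conv_rhs => rw [hu', smul_smul, inv_mul_cancel₀ hc, one_smul]
  have hsymm : (S⁻¹)ᵀ = S⁻¹ := by
    simpa [conjTranspose_eq_transpose_of_trivial] using hS.inv.isHermitian.eq
  rw [dotProduct_mulVec, ← hsymm, vecMul_transpose, hinv, smul_dotProduct, smul_eq_mul]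

end Matrix

theorem reduced_rank_lda_no_information_loss_general
    (p s K : ℕ)
    (lam : Fin p → ℝ) (lamp : ℝ)
    (ξ : Fin p → (Fin p → ℝ))
    (horth : ∀ i j : Fin p, ξ i ⬝ᵥ ξ j = if i = j then 1 else 0)
    (Sw : Matrix (Fin p) (Fin p) ℝ)
    (hspec : Sw = ∑ i : Fin p, lam i • vecMulVec (ξ i) (ξ i))
    (htail : ∀ i : Fin p, s ≤ (i : ℕ) → lam i = lamp)
    (hspike : ∀ i : Fin p, (i : ℕ) < s → lamp < lam i)
    (hpos : 0 < lamp)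
    (π : Fin K → ℝ) (hπ : ∀ k, 0 < π k)
    (μ : Fin K → (Fin p → ℝ)) (hcenter : ∑ k, π k • μ k = 0)
    (Sb : Matrix (Fin p) (Fin p) ℝ)
    (hSb : Sb = ∑ k : Fin K, π k • vecMulVec (μ k) (μ k))
    (γ : ℝ) (hγ : 0 < γ)
    (Sγ : Matrix (Fin p) (Fin p) ℝ) (hSγ : Sγ = Sw + γ • Sb)
    (U : Matrix (Fin p) (Fin p) ℝ)
    (hUorth : U ∈ Matrix.orthogonalGroup (Fin p) ℝ)
    (d : Fin p → ℝ) (hddesc : ∀ i j : Fin p, i ≤ j → d j ≤ d i)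
    (hdiag : Uᵀ * Sγ * U = Matrix.diagonal d) :
    ∀ k ℓ : Fin K, k < ℓ →
      ∀ j : Fin p, s + K - 1 ≤ (j : ℕ) →
        (fun i => U i j) ⬝ᵥ (Sw⁻¹ *ᵥ (μ k - μ ℓ)) = 0 := by
  intro k ℓ _ j hj
  set B := ∑ i, (lam i - lamp) • vecMulVec (ξ i) (ξ i)
  have hSw : Sw = lamp • 1 + B :=
    hspec.trans (sum_smul_vecMulVec_self_eq_smul_one_add horth lam lamp)
  have hlam (i) : lamp ≤ lam i :=
    (lt_or_ge (i : ℕ) s).elim (fun h => (hspike i h).le) fun h => (htail i h).ge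
  have hB : B.PosSemidef := posSemidef_sum_smul_vecMulVec_self (fun i => sub_nonneg.mpr (hlam i)) ξ
  have hγSb : (γ • Sb).PosSemidef :=
    hSb ▸ (posSemidef_sum_smul_vecMulVec_self (fun k => (hπ k).le) μ).smul hγ.le
  have hBrank : B.rank ≤ s := (rank_sum_smul_vecMulVec_le _ ξ ξ (T := {i | (i : ℕ) < s})
    fun i hi => by simpa using lt_of_not_ge fun h => hi (by rw [htail i h, sub_self])).trans
    (by simp [Fin.card_filter_val_lt])
  have hSbrank : (γ • Sb).rank ≤ K - 1 := by
    rw [rank_smul_of_mem_nonZeroDivisors _ (mem_nonZeroDivisors_of_ne_zero hγ.ne'), hSb]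
    simpa using rank_sum_smul_vecMulVec_le_card_sub_one π μ hcenter (hπ k).ne'
  have heig (t) : (B + γ • Sb) *ᵥ U.col t = (d t - lamp) • U.col t := by
    rw [show B + γ • Sb = Sγ - lamp • 1 by rw [hSγ, hSw]; abel, sub_mulVec,
      mulVec_col_eq_smul_of_transpose_mul_mul_eq_diagonal hUorth hdiag, smul_mulVec, one_mulVec,
      sub_smul]
  have hrank : (B + γ • Sb).rank ≤ j := by
    have := rank_add_le B (γ • Sb)
    omega
  have hdj : d j - lamp ≤ 0 := eigenvalue_nonpos_of_rank_le (Unitary.toUnits ⟨U, hUorth⟩).isUnit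
    heig (fun a b hab => sub_le_sub_right (hddesc a b hab) _) hrank
  obtain ⟨hBu, hγSbu⟩ := hB.mulVec_eq_zero_of_add_mulVec_eq_smul hγSb (heig j) hdj
  have hμu (k) : μ k ⬝ᵥ U.col j = 0 := by
    rw [smul_mulVec, smul_eq_zero_iff_right hγ.ne', hSb] at hγSbu
    exact dotProduct_eq_zero_of_sum_smul_vecMulVec_self_mulVec_eq_zero hπ hγSbu k
  have hSwu : Sw *ᵥ U.col j = lamp • U.col j := by
    rw [hSw, add_mulVec, hBu, smul_mulVec, one_mulVec, add_zero]
  have hSwpd : Sw.PosDef := hSw ▸ (PosDef.one.smul hpos).add_posSemidef hB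
  change U.col j ⬝ᵥ _ = 0
  rw [hSwpd.dotProduct_inv_mulVec_of_mulVec_eq_smul hSwu, dotProduct_sub, dotProduct_comm, hμu,
    dotProduct_comm, hμu, sub_zero, mul_zero]

/-- Theorem 1 of the paper: Under the spiked condition on `Σw`
and `p > s + K − 1`, if the orthogonal matrix `U` diagonalizes
`Σγ = Σw + γ Σb` with eigenvalues in descending order, then the columns of
`U` with index `≥ s + K − 1` (i.e. `U_{O2}`) are orthogonal to all Bayes
discriminant directions `Σw⁻¹ (μ k − μ ℓ)`; that is,
`U_{O2}ᵀ Σw⁻¹ (μ k − μ ℓ) = 0` for all `k < ℓ`. -/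
theorem reduced_rank_lda_no_information_loss
    (p s K : ℕ) (hp : s + K - 1 < p)
    (lam : Fin p → ℝ) (lamp : ℝ)
    (ξ : Fin p → (Fin p → ℝ))
    (horth : ∀ i j : Fin p, ξ i ⬝ᵥ ξ j = if i = j then 1 else 0)
    (hdesc : ∀ i j : Fin p, i ≤ j → lam j ≤ lam i)
    (Sw : Matrix (Fin p) (Fin p) ℝ)
    (hspec : Sw = ∑ i : Fin p, lam i • vecMulVec (ξ i) (ξ i))
    (htail : ∀ i : Fin p, s ≤ (i : ℕ) → lam i = lamp)
    (hspike : ∀ i : Fin p, (i : ℕ) < s → lamp < lam i)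
    (hpos : 0 < lamp)
    (π : Fin K → ℝ) (hπ : ∀ k, 0 < π k) (hπ1 : ∑ k, π k = 1)
    (μ : Fin K → (Fin p → ℝ)) (hcenter : ∑ k, π k • μ k = 0)
    (Sb : Matrix (Fin p) (Fin p) ℝ)
    (hSb : Sb = ∑ k : Fin K, π k • vecMulVec (μ k) (μ k))
    (γ : ℝ) (hγ : 0 < γ)
    (Sγ : Matrix (Fin p) (Fin p) ℝ) (hSγ : Sγ = Sw + γ • Sb)
    (U : Matrix (Fin p) (Fin p) ℝ)
    (hUorth : U ∈ Matrix.orthogonalGroup (Fin p) ℝ)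
    (d : Fin p → ℝ) (hddesc : ∀ i j : Fin p, i ≤ j → d j ≤ d i)
    (hdiag : Uᵀ * Sγ * U = Matrix.diagonal d) :
    ∀ k ℓ : Fin K, k < ℓ →
      ∀ j : Fin p, s + K - 1 ≤ (j : ℕ) →
        (fun i => U i j) ⬝ᵥ (Sw⁻¹ *ᵥ (μ k - μ ℓ)) = 0 :=
  reduced_rank_lda_no_information_loss_general p s K lam lamp ξ horth Sw hspec htail hspike hpos π
    hπ μ hcenter Sb hSb γ hγ Sγ hSγ U hUorth d hddesc hdiag
end

section
/- Let F = (Hᵀ, Gᵀ)ᵀ be an orthogonal p×p matrix where H is q×p, let Σ be symmetric positive definite, and let β = Σ⁻¹δ for some δ ∈ ℝ^p. If β lies in the row space of H (i.e., Gβ = 0), then Hβ = (H Σ Hᵀ)⁻¹ H δ. -/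
/-! Since `G β = 0` and `Hᵀ H + Gᵀ G = 1`, the vector `β = Hᵀ (H β)` lies in the row space of `H`,
so `(H Σ Hᵀ) (H β) = H Σ β = H δ`. As `H Hᵀ = 1` makes `x ↦ x H` injective on row vectors,
`H Σ Hᵀ` is again positive definite, hence invertible. -/

open Matrix

namespace Matrix

variable {m n l R : Type*} [Fintype n]

theorem mulVec_mulVec_eq_self_of_add_eq_one [Fintype m] [Fintype l] [DecidableEq n] [CommRing R]
    {P : Matrix n m R} {H : Matrix m n R} {Q : Matrix n l R} {G : Matrix l n R}
    (hcomplete : P * H + Q * G = 1) {β : n → R} (hGβ : G *ᵥ β = 0) :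
    P *ᵥ (H *ᵥ β) = β := by
  have h := congrArg (· *ᵥ β) hcomplete
  simpa only [add_mulVec, ← mulVec_mulVec, hGβ, mulVec_zero, add_zero, one_mulVec] using h

theorem PosDef.mul_mul_conjTranspose_of_mul_conjTranspose_eq_one [Fintype m] [DecidableEq m]
    [Ring R] [PartialOrder R] [StarRing R] {A : Matrix n n R} (hA : A.PosDef)
    {B : Matrix m n R} (hB : B * Bᴴ = 1) : (B * A * Bᴴ).PosDef :=
  hA.mul_mul_conjTranspose_same fun x y hxy => by
    simpa only [vecMul_vecMul, hB, vecMul_one] using congrArg (· ᵥ* Bᴴ) hxy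

theorem mulVec_eq_inv_mul_mul_transpose_mulVec [Fintype m] [DecidableEq m] [CommRing R]
    {H : Matrix m n R} {A : Matrix n n R} (hHAH : IsUnit (H * A * Hᵀ)) {β δ : n → R}
    (hβ : Hᵀ *ᵥ (H *ᵥ β) = β) (hδ : A *ᵥ β = δ) :
    H *ᵥ β = (H * A * Hᵀ)⁻¹ *ᵥ (H *ᵥ δ) := by
  have := hHAH.invertible
  refine (inv_mulVec_eq_vec ?_).symm
  rw [← mulVec_mulVec, hβ, ← mulVec_mulVec, hδ]

end Matrix

theorem projected_discriminant_direction_general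
    (p q r : ℕ)
    (H : Matrix (Fin q) (Fin p) ℝ) (G : Matrix (Fin r) (Fin p) ℝ)
    (hHH : H * Hᵀ = 1)
    (hcomplete : Hᵀ * H + Gᵀ * G = 1)
    (Sig : Matrix (Fin p) (Fin p) ℝ) (hPD : Sig.PosDef)
    (δ β : Fin p → ℝ) (hβ : β = Sig⁻¹ *ᵥ δ)
    (hGβ : G *ᵥ β = 0) :
    H *ᵥ β = (H * Sig * Hᵀ)⁻¹ *ᵥ (H *ᵥ δ) := by
  have hδ : Sig *ᵥ β = δ := by
    have := hPD.isUnit.invertible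
    rw [hβ, mulVec_mulVec, mul_inv_of_invertible, one_mulVec]
  have hHSigH : (H * Sig * Hᵀ).PosDef := by
    simpa only [conjTranspose_eq_transpose_of_trivial] using
      hPD.mul_mul_conjTranspose_of_mul_conjTranspose_eq_one (B := H)
        (by rwa [conjTranspose_eq_transpose_of_trivial])
  exact mulVec_eq_inv_mul_mul_transpose_mulVec hHSigH.isUnit
    (mulVec_mulVec_eq_self_of_add_eq_one hcomplete hGβ) hδ

/-- If `F = (Hᵀ, Gᵀ)ᵀ` is orthogonal, `Σ` is symmetric positive
definite, `β = Σ⁻¹ δ`, and `G β = 0`, then `H β = (H Σ Hᵀ)⁻¹ H δ`. -/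
theorem projected_discriminant_direction
    (p q r : ℕ) (hpq : q + r = p)
    (H : Matrix (Fin q) (Fin p) ℝ) (G : Matrix (Fin r) (Fin p) ℝ)
    (hHH : H * Hᵀ = 1) (hGG : G * Gᵀ = 1) (hHG : H * Gᵀ = 0)
    (hcomplete : Hᵀ * H + Gᵀ * G = 1)
    (Sig : Matrix (Fin p) (Fin p) ℝ) (hSym : Sig.IsSymm) (hPD : Sig.PosDef)
    (δ β : Fin p → ℝ) (hβ : β = Sig⁻¹ *ᵥ δ)
    (hGβ : G *ᵥ β = 0) :
    H *ᵥ β = (H * Sig * Hᵀ)⁻¹ *ᵥ (H *ᵥ δ) :=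
  projected_discriminant_direction_general p q r H G hHH hcomplete Sig hPD δ β hβ hGβ
end
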